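/- Let C : PPO_A^I → PPO_A be an arrovian voting system on at least three alternatives, where I may be infinite. Then the collection F of decisive subsets of I is a filter on I, the collection F' of strongly decisive sets is a filter with F' ⊆ F, and if C maps LPO_A^I into LPO_A then F is either the trivial filter 2^I or an ultrafilter on I. Moreover C_{F'} ⊆ C ⊆ C_F (pointwise on profiles), with equality C = C_F iff F = F'. -/

import Mathlib

variable {A I : Type*}

/-- A partial preorder: a reflexive and transitive binary relation. -/
def IsPPO (P : A → A → Prop) : Prop := Reflexive P ∧ Transitive P

/-- A linear (total) preorder: reflexive, transitive and complete. -/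
def IsLPO (P : A → A → Prop) : Prop := Reflexive P ∧ Transitive P ∧ ∀ a b, P a b ∨ P b a

/-- A profile of partial preorders. -/
def IsPPOProfile (P : I → A → A → Prop) : Prop := ∀ i, IsPPO (P i)

/-- A profile of linear (total) preorders. -/
def IsLPOProfile (P : I → A → A → Prop) : Prop := ∀ i, IsLPO (P i)

/-- Strict preference. -/
def StrictPref (P : A → A → Prop) (a b : A) : Prop := P a b ∧ ¬ P b a

/-- Indifference. -/
def Indiff (P : A → A → Prop) (a b : A) : Prop := P a b ∧ P b a

/-- The set `A` contains at least three distinct alternatives. -/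
def ThreeAlts (A : Type*) : Prop := ∃ a b c : A, a ≠ b ∧ b ≠ c ∧ a ≠ c

/-- Unanimity. -/
def Unanimity (C : (I → A → A → Prop) → A → A → Prop) : Prop :=
  ∀ P, IsPPOProfile P → ∀ a b : A, (∀ i, P i a b) → C P a b

/-- Independence of irrelevant alternatives. -/
def IIA (C : (I → A → A → Prop) → A → A → Prop) : Prop :=
  ∀ P P' : I → A → A → Prop, IsPPOProfile P → IsPPOProfile P' → ∀ a b : A,
    {i | P i a b} = {i | P' i a b} → {i | P i b a} = {i | P' i b a} →
    (C P a b ↔ C P' a b)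

/-- Neutrality: `C (ρ*P) = ρ*(C P)` for every permutation `ρ` of the alternatives. -/
def Neutrality (C : (I → A → A → Prop) → A → A → Prop) : Prop :=
  ∀ (ρ : Equiv.Perm A) (P : I → A → A → Prop), IsPPOProfile P →
    ∀ x y : A, C (fun i a b => P i (ρ.symm a) (ρ.symm b)) x y ↔ C P (ρ.symm x) (ρ.symm y)

/-- Monotonicity. -/
def Monotonicity (C : (I → A → A → Prop) → A → A → Prop) : Prop :=
  ∀ P P' : I → A → A → Prop, IsPPOProfile P → IsPPOProfile P' → ∀ a b : A,
    {i | P i a b} ⊆ {i | P' i a b} → {i | P' i b a} ⊆ {i | P i b a} →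
    C P a b → C P' a b

/-- `J` is a decisive set: unanimous strict preference on `J` forces weak aggregate preference. -/
def Decisive (C : (I → A → A → Prop) → A → A → Prop) (J : Set I) : Prop :=
  ∀ P, IsPPOProfile P → ∀ a b : A, (∀ j ∈ J, StrictPref (P j) a b) → C P a b

/-- `J` is a strongly decisive set: unanimous weak preference on `J` forces weak aggregate preference. -/
def SDecisive (C : (I → A → A → Prop) → A → A → Prop) (J : Set I) : Prop :=
  ∀ P, IsPPOProfile P → ∀ a b : A, (∀ j ∈ J, P j a b) → C P a b

/-!
Everything rests on one fact: if `C P a b`, then `{i | P i a b}` is decisive. Add a third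
alternative `c` that every voter ranks above `a`; transitivity of the outcome and IIA show that the
set decides `c` over `b` in the pattern where it prefers `c` and nobody else compares them.
The contagion argument of Arrow's theorem spreads this to every ordered pair of alternatives,
and one more insertion of a middle alternative to arbitrary profiles. Intersections are handled
by placing `c` between `a` and `b`, strictly on `J` and `K` in the decisive case, weakly on
`J ∩ K` in the strongly decisive one. For linear outcomes, the profile ranking `a` alone on top
on `K` and `b` alone on top off `K` makes `K` or its complement decisive.
-/

section TriPref

/-- `ab` says whether `a` is weakly preferred to `b`, and so on; no other two distinct
alternatives are comparable. -/
def triPref (a b c : A) (ab ba ac ca bc cb : Prop) : A → A → Prop := fun x y =>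
  x = y ∨ (x = a ∧ y = b ∧ ab) ∨ (x = b ∧ y = a ∧ ba) ∨ (x = a ∧ y = c ∧ ac) ∨
    (x = c ∧ y = a ∧ ca) ∨ (x = b ∧ y = c ∧ bc) ∨ (x = c ∧ y = b ∧ cb)

variable {a b c : A} {ab ba ac ca bc cb : Prop}

theorem triPref_isPPO (hab : a ≠ b) (hac : a ≠ c) (hbc : b ≠ c)
    (htrans : (ab → bc → ac) ∧ (ac → cb → ab) ∧ (ba → ac → bc) ∧ (bc → ca → ba) ∧
      (ca → ab → cb) ∧ (cb → ba → ca)) :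
    IsPPO (triPref a b c ab ba ac ca bc cb) := by
  refine ⟨fun x => Or.inl rfl, fun x y z hxy hyz => ?_⟩
  rcases hxy with rfl | ⟨rfl, rfl, h⟩ | ⟨rfl, rfl, h⟩ | ⟨rfl, rfl, h⟩ | ⟨rfl, rfl, h⟩ |
    ⟨rfl, rfl, h⟩ | ⟨rfl, rfl, h⟩
  · exact hyz
  all_goals
    rcases hyz with rfl | ⟨hy, rfl, h'⟩ | ⟨hy, rfl, h'⟩ | ⟨hy, rfl, h'⟩ | ⟨hy, rfl, h'⟩ |
      ⟨hy, rfl, h'⟩ | ⟨hy, rfl, h'⟩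
  all_goals simp_all [triPref]

theorem triPref_ab (hab : a ≠ b) (hac : a ≠ c) (hbc : b ≠ c) :
    triPref a b c ab ba ac ca bc cb a b ↔ ab := by
  simp [triPref, hab, hac, hbc, hab.symm]

theorem triPref_ba (hab : a ≠ b) (hac : a ≠ c) (hbc : b ≠ c) :
    triPref a b c ab ba ac ca bc cb b a ↔ ba := by
  simp [triPref, hab, hac, hbc, hab.symm]

theorem triPref_ac (hab : a ≠ b) (hac : a ≠ c) (hbc : b ≠ c) :
    triPref a b c ab ba ac ca bc cb a c ↔ ac := by
  simp [triPref, hab, hac, hac.symm, hbc.symm]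

theorem triPref_ca (hab : a ≠ b) (hac : a ≠ c) (hbc : b ≠ c) :
    triPref a b c ab ba ac ca bc cb c a ↔ ca := by
  simp [triPref, hab, hac, hac.symm, hbc.symm]

theorem triPref_bc (hab : a ≠ b) (hac : a ≠ c) (hbc : b ≠ c) :
    triPref a b c ab ba ac ca bc cb b c ↔ bc := by
  simp [triPref, hbc, hab.symm, hac.symm, hbc.symm]

theorem triPref_cb (hab : a ≠ b) (hac : a ≠ c) (hbc : b ≠ c) :
    triPref a b c ab ba ac ca bc cb c b ↔ cb := by
  simp [triPref, hbc, hab.symm, hac.symm, hbc.symm]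

end TriPref

theorem ThreeAlts.exists_ne_ne (hA : ThreeAlts A) (a b : A) : ∃ c, c ≠ a ∧ c ≠ b := by
  obtain ⟨x, y, z, hxy, hyz, hxz⟩ := hA
  by_contra! h
  have hab : ∀ c, c = a ∨ c = b := fun c => or_iff_not_imp_left.2 (h c)
  rcases hab x with rfl | rfl <;> rcases hab y with rfl | rfl <;> rcases hab z with rfl | rfl <;>
    simp_all

structure Arrovian (C : (I → A → A → Prop) → A → A → Prop) : Prop where
  isPPO : ∀ P, IsPPOProfile P → IsPPO (C P)
  unanimity : Unanimity C
  iia : IIA C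

/-- Decisiveness of `J` for `x` over `y`, tested only on the pattern where `J` strictly prefers `x`
to `y` and everyone else finds them incomparable; by IIA one such profile determines all. -/
def DecisiveFor (C : (I → A → A → Prop) → A → A → Prop) (J : Set I) (x y : A) : Prop :=
  ∀ Q : I → A → A → Prop, IsPPOProfile Q → {i | Q i x y} = J → {i | Q i y x} = ∅ → C Q x y

variable {C : (I → A → A → Prop) → A → A → Prop}

theorem Decisive.mono {J K : Set I} (hJK : J ⊆ K) (hJ : Decisive C J) : Decisive C K :=
  fun P hP a b hK => hJ P hP a b fun j hj => hK j (hJK hj)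

theorem SDecisive.mono {J K : Set I} (hJK : J ⊆ K) (hJ : SDecisive C J) : SDecisive C K :=
  fun P hP a b hK => hJ P hP a b fun j hj => hK j (hJK hj)

theorem SDecisive.decisive {J : Set I} (hJ : SDecisive C J) : Decisive C J :=
  fun P hP a b hJs => hJ P hP a b fun j hj => (hJs j hj).1

theorem Unanimity.sDecisive_univ (hU : Unanimity C) : SDecisive C (Set.univ : Set I) :=
  fun P hP a b h => hU P hP a b fun i => h i (Set.mem_univ i)

theorem DecisiveFor.exists_aggregate {J : Set I} {x y z : A} (hxy : x ≠ y) (hxz : x ≠ z)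
    (hyz : y ≠ z) (h : DecisiveFor C J x y) :
    ∃ P, IsPPOProfile P ∧ {i | P i x y} = J ∧ C P x y := by
  let P : I → A → A → Prop := fun i => triPref x y z (i ∈ J) False False False False False
  have hP : IsPPOProfile P := fun i => triPref_isPPO hxy hxz hyz (by tauto)
  have hPxy : {i | P i x y} = J := by ext i; simp [P, triPref_ab hxy hxz hyz]
  exact ⟨P, hP, hPxy, h P hP hPxy (by ext i; simp [P, triPref_ba hxy hxz hyz])⟩

namespace Arrovian

theorem aggregate_of_chain (hC : Arrovian C) {R Q : I → A → A → Prop} (hR : IsPPOProfile R)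
    (hQ : IsPPOProfile Q) {x y w : A} (hxw : C R x w) (hwy : C R w y)
    (hxy : {i | R i x y} = {i | Q i x y}) (hyx : {i | R i y x} = {i | Q i y x}) : C Q x y :=
  (hC.iia R Q hR hQ x y hxy hyx).1 ((hC.isPPO R hR).2 hxw hwy)

/-- Put `c` above `a` for everyone and above `b` exactly where `a` is above `b`. -/
theorem decisiveFor_left_of_aggregate (hC : Arrovian C) {P : I → A → A → Prop}
    (hP : IsPPOProfile P) {a b c : A} (hab : a ≠ b) (hca : c ≠ a) (hcb : c ≠ b)
    (h : C P a b) : DecisiveFor C {i | P i a b} c b := by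
  intro Q hQ hQcb hQbc
  have hac := hca.symm
  have hbc := hcb.symm
  let R : I → A → A → Prop := fun i =>
    triPref a b c (P i a b) (P i b a) False True False (P i a b)
  have hR : IsPPOProfile R := fun i => triPref_isPPO hab hac hbc (by tauto)
  refine hC.aggregate_of_chain hR hQ (w := a) ?_ ?_ ?_ ?_
  · exact hC.unanimity R hR c a fun i => (triPref_ca hab hac hbc).2 trivial
  · refine (hC.iia P R hP hR a b ?_ ?_).1 h
    · ext i; simp [R, triPref_ab hab hac hbc]
    · ext i; simp [R, triPref_ba hab hac hbc]
  · ext i; simp [R, hQcb, triPref_cb hab hac hbc]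
  · ext i; simp [R, hQbc, triPref_bc hab hac hbc]

/-- Put `c` below `b` for everyone and below `a` exactly where `a` is above `b`. -/
theorem decisiveFor_right_of_aggregate (hC : Arrovian C) {P : I → A → A → Prop}
    (hP : IsPPOProfile P) {a b c : A} (hab : a ≠ b) (hca : c ≠ a) (hcb : c ≠ b)
    (h : C P a b) : DecisiveFor C {i | P i a b} a c := by
  intro Q hQ hQac hQca
  have hac := hca.symm
  have hbc := hcb.symm
  let R : I → A → A → Prop := fun i =>
    triPref a b c (P i a b) (P i b a) (P i a b) False True False
  have hR : IsPPOProfile R := fun i => triPref_isPPO hab hac hbc (by tauto)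
  refine hC.aggregate_of_chain hR hQ (w := b) ?_ ?_ ?_ ?_
  · refine (hC.iia P R hP hR a b ?_ ?_).1 h
    · ext i; simp [R, triPref_ab hab hac hbc]
    · ext i; simp [R, triPref_ba hab hac hbc]
  · exact hC.unanimity R hR b c fun i => (triPref_bc hab hac hbc).2 trivial
  · ext i; simp [R, hQac, triPref_ac hab hac hbc]
  · ext i; simp [R, hQca, triPref_ca hab hac hbc]

theorem decisiveFor_left (hC : Arrovian C) {J : Set I} {x y z : A} (hxy : x ≠ y)
    (hzx : z ≠ x) (hzy : z ≠ y) (h : DecisiveFor C J x y) : DecisiveFor C J z y := by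
  obtain ⟨P, hP, rfl, hPxy⟩ := h.exists_aggregate hxy hzx.symm hzy.symm
  exact hC.decisiveFor_left_of_aggregate hP hxy hzx hzy hPxy

theorem decisiveFor_right (hC : Arrovian C) {J : Set I} {x y z : A} (hxy : x ≠ y)
    (hzx : z ≠ x) (hzy : z ≠ y) (h : DecisiveFor C J x y) : DecisiveFor C J x z := by
  obtain ⟨P, hP, rfl, hPxy⟩ := h.exists_aggregate hxy hzx.symm hzy.symm
  exact hC.decisiveFor_right_of_aggregate hP hxy hzx hzy hPxy

theorem decisiveFor_of_ne_left (hC : Arrovian C) {J : Set I} {x y u v : A} (hxy : x ≠ y)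
    (hvx : v ≠ x) (huv : u ≠ v) (h : DecisiveFor C J x y) : DecisiveFor C J u v := by
  have hxv : DecisiveFor C J x v := by
    by_cases hvy : v = y
    · exact hvy ▸ h
    · exact hC.decisiveFor_right hxy hvx hvy h
  by_cases hux : u = x
  · exact hux ▸ hxv
  · exact hC.decisiveFor_left hvx.symm hux huv hxv

theorem decisiveFor_of_ne (hC : Arrovian C) (hA : ThreeAlts A) {J : Set I} {x y u v : A}
    (hxy : x ≠ y) (huv : u ≠ v) (h : DecisiveFor C J x y) : DecisiveFor C J u v := by
  by_cases hvx : v = x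
  · subst hvx
    obtain ⟨w, hwv, hwy⟩ := hA.exists_ne_ne v y
    have hyw : DecisiveFor C J y w := hC.decisiveFor_of_ne_left hxy hwv (Ne.symm hwy) h
    exact hC.decisiveFor_of_ne_left (Ne.symm hwy) hxy huv hyw
  · exact hC.decisiveFor_of_ne_left hxy hvx huv h

/-- Route `a ≻ b` on `J` through a middle alternative `w`, incomparable to `a, b` off `J`. -/
theorem decisive_of_decisiveFor (hC : Arrovian C) (hA : ThreeAlts A) {J : Set I}
    (h : ∀ u v : A, u ≠ v → DecisiveFor C J u v) : Decisive C J := by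
  intro P hP a b hJ
  by_cases hab : a = b
  · exact hab ▸ (hC.isPPO P hP).1 a
  obtain ⟨w, hwa, hwb⟩ := hA.exists_ne_ne a b
  have haw := hwa.symm
  have hbw := hwb.symm
  let R : I → A → A → Prop := fun i =>
    triPref a b w (P i a b) (P i b a) (i ∈ J) False False (i ∈ J)
  have hJ' : ∀ i ∈ J, P i a b ∧ ¬P i b a := hJ
  have hR : IsPPOProfile R := fun i =>
    triPref_isPPO hab haw hbw (by have := hJ' i; tauto)
  refine hC.aggregate_of_chain hR hP (w := w) ?_ ?_ ?_ ?_
  · refine h a w haw R hR ?_ ?_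
    · ext i; simp [R, triPref_ac hab haw hbw]
    · ext i; simp [R, triPref_ca hab haw hbw]
  · refine h w b hwb R hR ?_ ?_
    · ext i; simp [R, triPref_cb hab haw hbw]
    · ext i; simp [R, triPref_bc hab haw hbw]
  · ext i; simp [R, triPref_ab hab haw hbw]
  · ext i; simp [R, triPref_ba hab haw hbw]

theorem decisive_setOf (hC : Arrovian C) (hA : ThreeAlts A) {P : I → A → A → Prop}
    (hP : IsPPOProfile P) {a b : A} (h : C P a b) : Decisive C {i | P i a b} := by
  by_cases hab : a = b
  · subst hab
    have huniv : {i | P i a a} = Set.univ := Set.eq_univ_of_forall fun i => (hP i).1 a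
    exact huniv ▸ hC.unanimity.sDecisive_univ.decisive
  obtain ⟨c, hca, hcb⟩ := hA.exists_ne_ne a b
  exact hC.decisive_of_decisiveFor hA fun u v huv =>
    hC.decisiveFor_of_ne hA hcb huv (hC.decisiveFor_left_of_aggregate hP hab hca hcb h)

/-- Rank `a ≻ c` on `J` and `c ≻ b` on `K`; then `a` and `b` are comparable exactly on `J ∩ K`. -/
theorem decisive_inter (hC : Arrovian C) (hA : ThreeAlts A) {J K : Set I}
    (hJ : Decisive C J) (hK : Decisive C K) : Decisive C (J ∩ K) := by
  obtain ⟨a, b, c, hab, hbc, hac⟩ := id hA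
  let R : I → A → A → Prop := fun i =>
    triPref a b c (i ∈ J ∩ K) False (i ∈ J) False False (i ∈ K)
  have hR : IsPPOProfile R := fun i =>
    triPref_isPPO hab hac hbc (by simp only [Set.mem_inter_iff]; tauto)
  have hRac : C R a c := hJ R hR a c fun j hj =>
    ⟨(triPref_ac hab hac hbc).2 hj, (triPref_ca hab hac hbc).not.2 not_false⟩
  have hRcb : C R c b := hK R hR c b fun j hj =>
    ⟨(triPref_cb hab hac hbc).2 hj, (triPref_bc hab hac hbc).not.2 not_false⟩
  have hRab : {i | R i a b} = J ∩ K := by ext i; simp [R, triPref_ab hab hac hbc]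
  exact hRab ▸ hC.decisive_setOf hA hR ((hC.isPPO R hR).2 hRac hRcb)

/-- Copy `P` on `{a, b}` and add `c`: a twin of `b` on `J ∩ K`, below `a` and `b` on `J \ K`,
above both on `K \ J`. -/
theorem sDecisive_inter (hC : Arrovian C) (hA : ThreeAlts A) {J K : Set I}
    (hJ : SDecisive C J) (hK : SDecisive C K) : SDecisive C (J ∩ K) := by
  intro P hP a b hJK
  by_cases hab : a = b
  · exact hab ▸ (hC.isPPO P hP).1 a
  obtain ⟨c, hca, hcb⟩ := hA.exists_ne_ne a b
  have hac := hca.symm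
  have hbc := hcb.symm
  let R : I → A → A → Prop := fun i =>
    triPref a b c (P i a b) (P i b a) (i ∈ J ∧ (i ∈ K → P i a b)) (i ∈ K ∧ (i ∈ J → P i b a))
      (i ∈ J) (i ∈ K)
  have hR : IsPPOProfile R := fun i => triPref_isPPO hab hac hbc (by tauto)
  refine hC.aggregate_of_chain hR hP (w := c) ?_ ?_ ?_ ?_
  · exact hJ R hR a c fun j hj => (triPref_ac hab hac hbc).2 ⟨hj, fun hk => hJK j ⟨hj, hk⟩⟩
  · exact hK R hR c b fun j hj => (triPref_cb hab hac hbc).2 hj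
  · ext i; simp [R, triPref_ab hab hac hbc]
  · ext i; simp [R, triPref_ba hab hac hbc]

def topPref (t : A) : A → A → Prop := fun x y => x = t ∨ y ≠ t

theorem topPref_isLPO (t : A) : IsLPO (topPref t) := by
  refine ⟨fun x => ?_, fun x y z hxy hyz => ?_, fun x y => ?_⟩ <;> unfold topPref at * <;> tauto

theorem decisive_or_decisive_compl (hC : Arrovian C) (hA : ThreeAlts A)
    (hLPO : ∀ P : I → A → A → Prop, IsLPOProfile P → IsLPO (C P)) (K : Set I) :
    Decisive C K ∨ Decisive C Kᶜ := by
  classical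
  obtain ⟨a, b, -, hab, -⟩ := id hA
  let P : I → A → A → Prop := fun i => if i ∈ K then topPref a else topPref b
  have hPL : IsLPOProfile P := fun i => by
    by_cases hi : i ∈ K <;> simp only [P, hi, if_true, if_false] <;> exact topPref_isLPO _
  have hP : IsPPOProfile P := fun i => ⟨(hPL i).1, (hPL i).2.1⟩
  rcases (hLPO P hPL).2.2 a b with h | h
  · left
    have hPab : {i | P i a b} = K := by
      ext i; by_cases hi : i ∈ K <;> simp [P, hi, topPref, hab, hab.symm]
    exact hPab ▸ hC.decisive_setOf hA hP h
  · right
    have hPba : {i | P i b a} = Kᶜ := by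
      ext i; by_cases hi : i ∈ K <;> simp [P, hi, topPref, hab, hab.symm]
    exact hPba ▸ hC.decisive_setOf hA hP h

end Arrovian

theorem filter_of_decisive_sets (C : (I → A → A → Prop) → A → A → Prop)
    (hA : ThreeAlts A)
    (hC : ∀ P, IsPPOProfile P → IsPPO (C P))
    (hU : Unanimity C) (hIIA : IIA C) :
    (Decisive C Set.univ ∧
      (∀ J K : Set I, J ⊆ K → Decisive C J → Decisive C K) ∧
      (∀ J K : Set I, Decisive C J → Decisive C K → Decisive C (J ∩ K))) ∧
    (SDecisive C Set.univ ∧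
      (∀ J K : Set I, J ⊆ K → SDecisive C J → SDecisive C K) ∧
      (∀ J K : Set I, SDecisive C J → SDecisive C K → SDecisive C (J ∩ K))) ∧
    (∀ J : Set I, SDecisive C J → Decisive C J) ∧
    ((∀ P : I → A → A → Prop, IsLPOProfile P → IsLPO (C P)) →
      (∀ J : Set I, Decisive C J) ∨
      (¬ Decisive C (∅ : Set I) ∧ ∀ K : Set I, Decisive C K ∨ Decisive C Kᶜ)) ∧
    (∀ P : I → A → A → Prop, IsPPOProfile P → ∀ a b : A,
      (∃ J : Set I, SDecisive C J ∧ ∀ j ∈ J, P j a b) → C P a b) ∧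
    (∀ P : I → A → A → Prop, IsPPOProfile P → ∀ a b : A,
      C P a b → ∃ J : Set I, Decisive C J ∧ ∀ j ∈ J, P j a b) ∧
    ((∀ P : I → A → A → Prop, IsPPOProfile P → ∀ a b : A,
        C P a b ↔ ∃ J : Set I, Decisive C J ∧ ∀ j ∈ J, P j a b) ↔
      (∀ J : Set I, Decisive C J ↔ SDecisive C J)) := by
  have hArrow : Arrovian C := ⟨hC, hU, hIIA⟩
  have aggregate_le : ∀ P : I → A → A → Prop, IsPPOProfile P → ∀ a b : A,
      C P a b → ∃ J : Set I, Decisive C J ∧ ∀ j ∈ J, P j a b :=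
    fun P hP a b h => ⟨_, hArrow.decisive_setOf hA hP h, fun _ => id⟩
  refine ⟨⟨hU.sDecisive_univ.decisive, fun _ _ => Decisive.mono, fun _ _ =>
      hArrow.decisive_inter hA⟩,
    ⟨hU.sDecisive_univ, fun _ _ => SDecisive.mono, fun _ _ => hArrow.sDecisive_inter hA⟩,
    fun _ => SDecisive.decisive, fun hLPO => ?_,
    fun P hP a b ⟨J, hJ, hPJ⟩ => hJ P hP a b hPJ, aggregate_le, ?_⟩
  · by_cases hEmpty : Decisive C (∅ : Set I)
    · exact Or.inl fun J => hEmpty.mono (Set.empty_subset J)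
    · exact Or.inr ⟨hEmpty, hArrow.decisive_or_decisive_compl hA hLPO⟩
  · refine ⟨fun hCF J => ⟨fun hJ P hP a b hPJ => (hCF P hP a b).2 ⟨J, hJ, hPJ⟩,
      SDecisive.decisive⟩, fun hFF P hP a b => ⟨aggregate_le P hP a b, ?_⟩⟩
    rintro ⟨J, hJ, hPJ⟩
    exact (hFF J).1 hJ P hP a b hPJ
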